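/- Let ε ≥ 0, p = 1/(1 + e^ε), m ≥ 1, and q ∈ [0, 1]. Let M^{DPRR} be the degree-preserving random response mechanism on binary vectors a ∈ {0,1}^m that independently sets each output coordinate to 1 with probability (1 − p)·q if the input coordinate is 1 and with probability p·q if the input coordinate is 0 (and to 0 otherwise). Then for any two binary vectors a, â ∈ {0,1}^m differing in exactly one coordinate and any output vector ã ∈ {0,1}^m, Pr[M^{DPRR}(a) = ã] ≤ e^ε · Pr[M^{DPRR}(â) = ã]. -/
import Mathlib


open BigOperators

/-- The per-bit transition probability of degree-preserving random response (DPRR):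
the output bit is `1` with probability `(1 - p) * q` if the input bit is `1` and with
probability `p * q` if the input bit is `0`, and `0` otherwise. -/
def dprrProb (p q : ℝ) (b btil : Bool) : ℝ :=
  if btil then (if b then (1 - p) * q else p * q)
  else 1 - (if b then (1 - p) * q else p * q)

lemma dprr_nonneg {p q : ℝ} (hp0 : 0 ≤ p) (hp1 : p ≤ 1/2) (hq0 : 0 ≤ q) (hq1 : q ≤ 1)
    (b btil : Bool) : 0 ≤ dprrProb p q b btil := by
  cases b <;> cases btil <;> simp [dprrProb] <;> nlinarith

lemma dprr_key {E p q : ℝ} (hE : 1 ≤ E) (hpE : p * (1 + E) = 1) (hp0 : 0 ≤ p) (hp1 : p ≤ 1/2)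
    (hq0 : 0 ≤ q) (hq1 : q ≤ 1) (b b' btil : Bool) :
    dprrProb p q b btil ≤ E * dprrProb p q b' btil := by
  cases b <;> cases b' <;> cases btil <;> simp [dprrProb] <;> nlinarith [mul_nonneg (sub_nonneg.mpr hq1) (sub_nonneg.mpr hE), mul_nonneg (mul_nonneg hp0 hq0) (sub_nonneg.mpr hE)]

/-- Theorem 3.2: the degree-preserving random response mechanism with
`p = 1/(1 + e^ε)` and keep probability `q ∈ [0, 1]` achieves the `ε`-DP likelihood
bound between any two binary vectors differing in exactly one coordinate. -/
theorem dprr_privacy (ε : ℝ) (hε : 0 ≤ ε)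
    (p : ℝ) (hp : p = 1 / (1 + Real.exp ε))
    (q : ℝ) (hq : q ∈ Set.Icc (0 : ℝ) 1)
    (m : ℕ) (hm : 1 ≤ m)
    (a ahat : Fin m → Bool)
    (hneighbor : (Finset.univ.filter (fun j => a j ≠ ahat j)).card = 1)
    (atil : Fin m → Bool) :
    (∏ j, dprrProb p q (a j) (atil j)) ≤ Real.exp ε * ∏ j, dprrProb p q (ahat j) (atil j) := by
  obtain ⟨hq0, hq1⟩ := hq
  set E := Real.exp ε with hEdef
  have hE : 1 ≤ E := Real.one_le_exp hε
  have hpos : (0:ℝ) < 1 + E := by linarith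
  have hpE : p * (1 + E) = 1 := by
    rw [hp]; field_simp
  have hp0 : 0 ≤ p := by
    rw [hp]; positivity
  have hp1 : p ≤ 1/2 := by nlinarith
  obtain ⟨j0, hj0⟩ := Finset.card_eq_one.mp hneighbor
  have heq : ∀ j, j ≠ j0 → a j = ahat j := by
    intro j hj
    by_contra h
    have : j ∈ Finset.univ.filter (fun j => a j ≠ ahat j) := by
      simp [h]
    rw [hj0] at this
    exact hj (Finset.mem_singleton.mp this)
  have hsplit1 : (∏ j, dprrProb p q (a j) (atil j))
      = dprrProb p q (a j0) (atil j0) * ∏ j ∈ Finset.univ.erase j0, dprrProb p q (a j) (atil j) :=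
    (Finset.mul_prod_erase _ _ (Finset.mem_univ j0)).symm
  have hsplit2 : (∏ j, dprrProb p q (ahat j) (atil j))
      = dprrProb p q (ahat j0) (atil j0) * ∏ j ∈ Finset.univ.erase j0, dprrProb p q (ahat j) (atil j) :=
    (Finset.mul_prod_erase _ _ (Finset.mem_univ j0)).symm
  have hrest : (∏ j ∈ Finset.univ.erase j0, dprrProb p q (a j) (atil j))
      = ∏ j ∈ Finset.univ.erase j0, dprrProb p q (ahat j) (atil j) := by
    apply Finset.prod_congr rfl
    intro j hj
    rw [heq j (Finset.ne_of_mem_erase hj)]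
  have hrestnn : 0 ≤ ∏ j ∈ Finset.univ.erase j0, dprrProb p q (ahat j) (atil j) :=
    Finset.prod_nonneg fun j _ => dprr_nonneg hp0 hp1 hq0 hq1 _ _
  rw [hsplit1, hsplit2, hrest, ← mul_assoc]
  exact mul_le_mul_of_nonneg_right (dprr_key hE hpE hp0 hp1 hq0 hq1 _ _ _) hrestnn
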